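/- (Nested/Matryoshka optimality.) Let H_r ∈ ℝ^{L×k_r} have full column rank, H_p ∈ ℝ^{L×k_p} with k_r < k_p ≤ L, W* = (H_rᵀH_r)⁻¹H_rᵀH_p, and R = H_p − H_rW* with SVD R = UΣVᵀ. For each m with 1 ≤ m ≤ k_p − k_r, let H_res^{(m)} = R V_m where V_m consists of the first m columns of V. Then for every X ∈ ℝ^{L×m}, min over A ∈ ℝ^{(k_r+m)×k_p} of ‖H_p − [H_r, H_res^{(m)}]A‖_F² ≤ min over A ∈ ℝ^{(k_r+m)×k_p} of ‖H_p − [H_r, X]A‖_F²; moreover H_res^{(m)} equals the first m columns of H_res^{(m')} for every m' ≥ m, so each prefix of the reverse-distilled embedding is itself an optimal representation at its dimension. -/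

import Mathlib

/-!
The least-squares residual `R = H_p - H_r W*` is orthogonal to the columns of `H_r`. Hence, for
any `X` and `A`, splitting off the part of `H_p - [H_r, X] A` that lies in the column space of
`H_r` leaves a rank-`m` approximation error of `R`, which by Eckart–Young is at least the tail
`∑_{i ≥ m} σᵢ²` of the squared singular values. The choice `X = R V_m`, `A = [W*; V_mᵀ]` leaves
exactly `R (1 - V_m V_mᵀ)`, whose squared norm is that tail. The nesting statement holds by
definition: the first `m` columns of `R V_{m'}` are the first `m` columns of `R V`.
-/

open Matrix

/-- Squared Frobenius norm of a real matrix: ‖M‖_F² = trace(MᵀM). -/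
noncomputable def frobSq {m n : ℕ} (M : Matrix (Fin m) (Fin n) ℝ) : ℝ :=
  Matrix.trace (Mᵀ * M)

/-- The `L × k` rectangular diagonal matrix with diagonal entries `σ 0, σ 1, …`. -/
noncomputable def rectDiag (L k : ℕ) (σ : ℕ → ℝ) : Matrix (Fin L) (Fin k) ℝ :=
  Matrix.of fun i j => if (i : ℕ) = (j : ℕ) then σ (i : ℕ) else 0

open Finset

section Frobenius

variable {a b c : ℕ}

theorem frobSq_eq_sum_sq (M : Matrix (Fin a) (Fin b) ℝ) : frobSq M = ∑ i, ∑ j, M i j ^ 2 := by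
  simp only [frobSq, trace, Matrix.diag, Matrix.mul_apply, transpose_apply, sq]
  exact sum_comm

theorem frobSq_nonneg (M : Matrix (Fin a) (Fin b) ℝ) : 0 ≤ frobSq M := by
  rw [frobSq_eq_sum_sq]
  positivity

theorem frobSq_transpose (M : Matrix (Fin a) (Fin b) ℝ) : frobSq Mᵀ = frobSq M := by
  rw [frobSq, frobSq, transpose_transpose, trace_mul_comm]

theorem frobSq_add (X Y : Matrix (Fin a) (Fin b) ℝ) :
    frobSq (X + Y) = frobSq X + 2 * trace (Xᵀ * Y) + frobSq Y := by
  have hYX : trace (Yᵀ * X) = trace (Xᵀ * Y) := by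
    rw [← trace_transpose, transpose_mul, transpose_transpose]
  simp only [frobSq, transpose_add, Matrix.add_mul, Matrix.mul_add, trace_add, hYX]
  ring

theorem frobSq_add_of_transpose_mul_eq_zero {X Y : Matrix (Fin a) (Fin b) ℝ} (h : Xᵀ * Y = 0) :
    frobSq (X + Y) = frobSq X + frobSq Y := by
  rw [frobSq_add, h, trace_zero, mul_zero, add_zero]

theorem frobSq_add_of_mul_transpose_eq_zero {X Y : Matrix (Fin a) (Fin b) ℝ} (h : X * Yᵀ = 0) :
    frobSq (X + Y) = frobSq X + frobSq Y := by
  rw [← frobSq_transpose, transpose_add, frobSq_add_of_transpose_mul_eq_zero (by simpa),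
    frobSq_transpose, frobSq_transpose]

theorem frobSq_mul_of_transpose_mul_self_eq_one {U : Matrix (Fin c) (Fin a) ℝ} (hU : Uᵀ * U = 1)
    (M : Matrix (Fin a) (Fin b) ℝ) : frobSq (U * M) = frobSq M := by
  rw [frobSq, transpose_mul, Matrix.mul_assoc, ← Matrix.mul_assoc Uᵀ, hU, Matrix.one_mul, frobSq]

theorem frobSq_mul_of_mul_transpose_self_eq_one {N : Matrix (Fin b) (Fin c) ℝ} (hN : N * Nᵀ = 1)
    (M : Matrix (Fin a) (Fin b) ℝ) : frobSq (M * N) = frobSq M := by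
  rw [← frobSq_transpose, transpose_mul,
    frobSq_mul_of_transpose_mul_self_eq_one (by rwa [transpose_transpose]), frobSq_transpose]

theorem frobSq_of_transpose_mul_self_eq_one {Q : Matrix (Fin b) (Fin c) ℝ} (hQ : Qᵀ * Q = 1) :
    frobSq Q = c := by
  rw [frobSq, hQ, trace_one, Fintype.card_fin]

theorem frobSq_eq_frobSq_mul_add_frobSq_sub {Q : Matrix (Fin b) (Fin c) ℝ} (hQ : Qᵀ * Q = 1)
    (M : Matrix (Fin a) (Fin b) ℝ) : frobSq M = frobSq (M * Q) + frobSq (M - M * Q * Qᵀ) := by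
  have horth : M * Q * Qᵀ * (M - M * Q * Qᵀ)ᵀ = 0 := by
    simp only [transpose_sub, transpose_mul, transpose_transpose, Matrix.mul_sub, Matrix.mul_assoc]
    rw [← Matrix.mul_assoc Qᵀ Q, hQ, Matrix.one_mul, sub_self]
  conv_lhs => rw [← add_sub_cancel (M * Q * Qᵀ) M]
  rw [frobSq_add_of_mul_transpose_eq_zero horth,
    frobSq_mul_of_mul_transpose_self_eq_one (by rwa [transpose_transpose])]

theorem frobSq_mul_le {Q : Matrix (Fin b) (Fin c) ℝ} (hQ : Qᵀ * Q = 1)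
    (M : Matrix (Fin a) (Fin b) ℝ) : frobSq (M * Q) ≤ frobSq M := by
  rw [frobSq_eq_frobSq_mul_add_frobSq_sub hQ M]
  exact le_add_of_nonneg_right (frobSq_nonneg _)

theorem sum_sq_row_le_one {Q : Matrix (Fin b) (Fin c) ℝ} (hQ : Qᵀ * Q = 1) (i : Fin b) :
    ∑ j, Q i j ^ 2 ≤ 1 := by
  have hrow : (1 : Matrix (Fin b) (Fin b) ℝ).submatrix (fun _ : Fin 1 => i) id * Q =
      Q.submatrix (fun _ => i) id := by
    simpa using (submatrix_mul 1 Q (fun _ : Fin 1 => i) id id Function.bijective_id).symm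
  have := frobSq_mul_le hQ ((1 : Matrix (Fin b) (Fin b) ℝ).submatrix (fun _ : Fin 1 => i) id)
  simpa [hrow, frobSq_eq_sum_sq, one_apply] using this

theorem frobSq_le_frobSq_add_mul {H : Matrix (Fin a) (Fin c) ℝ} {X : Matrix (Fin a) (Fin b) ℝ}
    (hX : Hᵀ * X = 0) (D : Matrix (Fin c) (Fin b) ℝ) : frobSq X ≤ frobSq (X + H * D) := by
  have hXH : Xᵀ * H = 0 := by simpa using congrArg transpose hX
  rw [frobSq_add_of_transpose_mul_eq_zero (by rw [← Matrix.mul_assoc, hXH, Matrix.zero_mul])]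
  exact le_add_of_nonneg_right (frobSq_nonneg _)

end Frobenius

section RectDiag

variable {L k : ℕ} (σ : ℕ → ℝ)

theorem rectDiag_transpose_mul_self (h : k ≤ L) :
    (rectDiag L k σ)ᵀ * rectDiag L k σ = diagonal fun i : Fin k => σ i ^ 2 := by
  ext j j'
  rw [Matrix.mul_apply, sum_eq_single (Fin.castLE h j)]
  · by_cases hjj' : j = j' <;> simp [rectDiag, hjj', Fin.val_ne_of_ne, sq]
  · intro i _ hi
    simp [rectDiag, show (i : ℕ) ≠ j from fun e => hi (Fin.ext e)]
  · simp

theorem frobSq_rectDiag_mul {n : ℕ} (h : k ≤ L) (M : Matrix (Fin k) (Fin n) ℝ) :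
    frobSq (rectDiag L k σ * M) = ∑ i : Fin k, σ i ^ 2 * ∑ j, M i j ^ 2 := by
  rw [frobSq, transpose_mul, Matrix.mul_assoc, ← Matrix.mul_assoc (rectDiag L k σ)ᵀ,
    rectDiag_transpose_mul_self σ h]
  simp only [trace, Matrix.diag, Matrix.mul_apply, diagonal_apply, transpose_apply,
    ite_mul, zero_mul, sum_ite_eq, mem_univ, if_true, mul_sum]
  rw [sum_comm]
  exact sum_congr rfl fun i _ => sum_congr rfl fun j _ => by ring

theorem frobSq_rectDiag (h : k ≤ L) : frobSq (rectDiag L k σ) = ∑ i ∈ range k, σ i ^ 2 := by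
  simpa [one_apply, Fin.sum_univ_eq_sum_range (fun i => σ i ^ 2)] using
    frobSq_rectDiag_mul σ h (1 : Matrix (Fin k) (Fin k) ℝ)

end RectDiag

theorem sum_Ico_le_sum_mul_of_antitone {m n : ℕ} {a : ℕ → ℝ} (ha : Antitone a) (ham : 0 ≤ a m)
    {p : Fin n → ℝ} (hp0 : ∀ i, 0 ≤ p i) (hp1 : ∀ i, p i ≤ 1)
    (hp : ((n - m : ℕ) : ℝ) ≤ ∑ i, p i) : ∑ i ∈ Ico m n, a i ≤ ∑ i : Fin n, a i * p i := by
  have hIco (f : ℕ → ℝ) : ∑ i : Fin n, (if m ≤ (i : ℕ) then f i else 0) = ∑ i ∈ Ico m n, f i := by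
    rw [Fin.sum_univ_eq_sum_range (fun i => if m ≤ i then f i else 0), ← sum_filter]
    congr 1
    ext i
    simp only [mem_filter, mem_range, mem_Ico]
    omega
  -- termwise `(a i - a m) * (p i - [m ≤ i]) ≥ 0`, as `a` is antitone and `0 ≤ p ≤ 1`
  have hterm (i : Fin n) : a m * (p i - if m ≤ (i : ℕ) then 1 else 0) ≤
      a i * p i - if m ≤ (i : ℕ) then a i else 0 := by
    split_ifs with hi
    · nlinarith [ha hi, hp1 i]
    · nlinarith [ha (not_le.1 hi).le, hp0 i]
  have hcount : ∑ i : Fin n, (if m ≤ (i : ℕ) then (1 : ℝ) else 0) = (n - m : ℕ) := by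
    simpa using hIco fun _ => 1
  have hsum := sum_le_sum fun i (_ : i ∈ univ) => hterm i
  rw [← mul_sum, sum_sub_distrib, sum_sub_distrib, hIco, hcount] at hsum
  nlinarith [mul_nonneg ham (sub_nonneg.2 hp)]

namespace Matrix

theorem isUnit_of_rank_eq_card {n K : Type*} [Fintype n] [DecidableEq n] [Field K]
    {A : Matrix n n K} (h : A.rank = Fintype.card n) : IsUnit A :=
  mulVec_surjective_iff_isUnit.1 <| (LinearMap.range_eq_top (f := A.mulVecLin)).1 <|
    Submodule.eq_top_of_finrank_eq (by rw [Module.finrank_pi]; exact h)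

theorem transpose_mul_sub_mul_inv_eq_zero {l r n K : Type*} [Fintype l] [Fintype r]
    [DecidableEq r] [CommRing K] {H : Matrix l r K} (hH : IsUnit (Hᵀ * H).det)
    (Y : Matrix l n K) : Hᵀ * (Y - H * ((Hᵀ * H)⁻¹ * Hᵀ * Y)) = 0 := by
  rw [Matrix.mul_sub, ← Matrix.mul_assoc, ← Matrix.mul_assoc, ← Matrix.mul_assoc,
    mul_nonsing_inv _ hH, Matrix.one_mul, sub_self]

end Matrix

theorem exists_orthonormal_cols_mul_eq_zero {m k : ℕ} (N : Matrix (Fin m) (Fin k) ℝ) :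
    ∃ (d : ℕ) (Q : Matrix (Fin k) (Fin d) ℝ), k - m ≤ d ∧ Qᵀ * Q = 1 ∧ N * Q = 0 := by
  have hrank := (toEuclideanLin N).finrank_range_add_finrank_ker
  have hrange := Submodule.finrank_le (LinearMap.range (toEuclideanLin N))
  simp only [finrank_euclideanSpace_fin] at hrank hrange
  let b := stdOrthonormalBasis ℝ (LinearMap.ker (toEuclideanLin N))
  refine ⟨_, of fun i j => (b j : EuclideanSpace ℝ (Fin k)) i, by omega, ?_, ?_⟩
  · ext j j'
    rw [one_apply, ← orthonormal_iff_ite.1 b.orthonormal j j', Submodule.coe_inner,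
      PiLp.inner_apply]
    simp only [Matrix.mul_apply, transpose_apply, of_apply, RCLike.inner_apply, conj_trivial]
    exact sum_congr rfl fun _ _ => mul_comm _ _
  · ext i j
    have hker : N *ᵥ (b j : EuclideanSpace ℝ (Fin k)) = 0 :=
      congrArg WithLp.ofLp (LinearMap.mem_ker.1 (b j).2)
    simpa [Matrix.mul_apply, mulVec, dotProduct] using congrFun hker i

section SVD

variable {L k n : ℕ} {σ : ℕ → ℝ} {U : Matrix (Fin n) (Fin L) ℝ} {V : Matrix (Fin k) (Fin k) ℝ}
  {R : Matrix (Fin n) (Fin k) ℝ}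

theorem sum_Ico_sq_le_frobSq_rectDiag_mul {m d : ℕ} (hσ : Antitone σ) (hσ0 : ∀ i, 0 ≤ σ i)
    (h : k ≤ L) {Q : Matrix (Fin k) (Fin d) ℝ} (hQ : Qᵀ * Q = 1) (hd : k - m ≤ d) :
    ∑ i ∈ Ico m k, σ i ^ 2 ≤ frobSq (rectDiag L k σ * Q) := by
  rw [frobSq_rectDiag_mul σ h]
  refine sum_Ico_le_sum_mul_of_antitone (fun i j hij => pow_le_pow_left₀ (hσ0 j) (hσ hij) 2)
    (sq_nonneg _) (fun i => sum_nonneg fun j _ => sq_nonneg _) (sum_sq_row_le_one hQ) ?_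
  rw [← frobSq_eq_sum_sq, frobSq_of_transpose_mul_self_eq_one hQ]
  exact_mod_cast hd

/-- Eckart–Young lower bound: `G * N` vanishes on an orthonormal frame `Q` of `ker N`, which has
dimension at least `k - m`, so `‖R - G N‖ ≥ ‖R Q‖`. -/
theorem sum_Ico_sq_le_frobSq_sub_mul {m : ℕ} (hσ : Antitone σ) (hσ0 : ∀ i, 0 ≤ σ i)
    (h : k ≤ L) (hU : Uᵀ * U = 1) (hV : V * Vᵀ = 1) (hR : R = U * rectDiag L k σ * Vᵀ)
    (G : Matrix (Fin n) (Fin m) ℝ) (N : Matrix (Fin m) (Fin k) ℝ) :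
    ∑ i ∈ Ico m k, σ i ^ 2 ≤ frobSq (R - G * N) := by
  obtain ⟨d, Q, hd, hQ, hNQ⟩ := exists_orthonormal_cols_mul_eq_zero N
  have hVQ : (Vᵀ * Q)ᵀ * (Vᵀ * Q) = 1 := by
    rw [transpose_mul, transpose_transpose, Matrix.mul_assoc, ← Matrix.mul_assoc V, hV,
      Matrix.one_mul, hQ]
  calc ∑ i ∈ Ico m k, σ i ^ 2 ≤ frobSq (rectDiag L k σ * (Vᵀ * Q)) :=
        sum_Ico_sq_le_frobSq_rectDiag_mul hσ hσ0 h hVQ hd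
    _ = frobSq ((R - G * N) * Q) := by
        rw [Matrix.sub_mul, Matrix.mul_assoc G, hNQ, Matrix.mul_zero, sub_zero, hR,
          Matrix.mul_assoc, Matrix.mul_assoc, frobSq_mul_of_transpose_mul_self_eq_one hU]
    _ ≤ frobSq (R - G * N) := frobSq_mul_le hQ _

theorem frobSq_sub_mul_submatrix_castLE {m : ℕ} (h : k ≤ L) (hm : m ≤ k) (hU : Uᵀ * U = 1)
    (hV : Vᵀ * V = 1) (hR : R = U * rectDiag L k σ * Vᵀ) :
    frobSq (R - R * V.submatrix id (Fin.castLE hm) * (V.submatrix id (Fin.castLE hm))ᵀ) =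
      ∑ i ∈ Ico m k, σ i ^ 2 := by
  set Vm := V.submatrix id (Fin.castLE hm)
  have hVm : Vmᵀ * Vm = 1 := by
    rw [transpose_submatrix, ← submatrix_mul _ _ _ _ _ Function.bijective_id, hV,
      submatrix_one _ (Fin.castLE_injective hm)]
  have hRVm : R * Vm = U * rectDiag L m σ := by
    rw [← submatrix_id_id R, ← submatrix_mul _ _ _ _ _ Function.bijective_id, hR,
      Matrix.mul_assoc, Matrix.mul_assoc, hV, Matrix.mul_one, ← submatrix_id_id U,
      submatrix_mul _ _ _ _ _ Function.bijective_id]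
    rfl
  have hRVm_norm : frobSq (R * Vm) = ∑ i ∈ range m, σ i ^ 2 := by
    rw [hRVm, frobSq_mul_of_transpose_mul_self_eq_one hU, frobSq_rectDiag σ (hm.trans h)]
  have hR_norm : frobSq R = ∑ i ∈ range k, σ i ^ 2 := by
    rw [hR, frobSq_mul_of_mul_transpose_self_eq_one (by rwa [transpose_transpose]),
      frobSq_mul_of_transpose_mul_self_eq_one hU, frobSq_rectDiag σ h]
  linarith [frobSq_eq_frobSq_mul_add_frobSq_sub hVm R, sum_range_add_sum_Ico (σ · ^ 2) hm]

end SVD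

/-- Dropping the component in the column space of `H`, which only decreases the error, turns the
approximation `H A₁ + Y A₂` of `P` into a rank-`m` approximation of the residual `R`. -/
theorem sum_Ico_sq_le_frobSq_sub_fromCols_mul {L r k n m : ℕ} {σ : ℕ → ℝ}
    {U : Matrix (Fin L) (Fin n) ℝ} {V : Matrix (Fin k) (Fin k) ℝ} {H : Matrix (Fin L) (Fin r) ℝ}
    {P R : Matrix (Fin L) (Fin k) ℝ} (hσ : Antitone σ) (hσ0 : ∀ i, 0 ≤ σ i) (h : k ≤ n)
    (hU : Uᵀ * U = 1) (hV : V * Vᵀ = 1) (hH : H.rank = r)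
    (hR : R = P - H * ((Hᵀ * H)⁻¹ * Hᵀ * P)) (hSVD : R = U * rectDiag n k σ * Vᵀ)
    (Y : Matrix (Fin L) (Fin m) ℝ) (A : Matrix (Fin r ⊕ Fin m) (Fin k) ℝ) :
    ∑ i ∈ Ico m k, σ i ^ 2 ≤ frobSq (P - fromCols H Y * A) := by
  have hHH : IsUnit (Hᵀ * H).det := (isUnit_iff_isUnit_det _).1 <|
    isUnit_of_rank_eq_card (by rw [rank_transpose_mul_self, hH, Fintype.card_fin])
  set C := (Hᵀ * H)⁻¹ * Hᵀ * Y
  have hR0 : Hᵀ * R = 0 := hR ▸ transpose_mul_sub_mul_inv_eq_zero hHH P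
  have hY0 : Hᵀ * (Y - H * C) = 0 := transpose_mul_sub_mul_inv_eq_zero hHH Y
  have hsplit : P - fromCols H Y * A = (R - (Y - H * C) * A.toRows₂) +
      H * ((Hᵀ * H)⁻¹ * Hᵀ * P - A.toRows₁ - C * A.toRows₂) := by
    rw [← fromRows_toRows A, fromCols_mul_fromRows, hR]
    simp only [Matrix.mul_sub, Matrix.sub_mul, Matrix.mul_assoc, toRows₁_fromRows,
      toRows₂_fromRows]
    abel
  calc ∑ i ∈ Ico m k, σ i ^ 2 ≤ frobSq (R - (Y - H * C) * A.toRows₂) :=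
        sum_Ico_sq_le_frobSq_sub_mul hσ hσ0 h hU hV hSVD _ _
    _ ≤ frobSq (P - fromCols H Y * A) := hsplit ▸ frobSq_le_frobSq_add_mul
        (by rw [Matrix.mul_sub, hR0, ← Matrix.mul_assoc, hY0, Matrix.zero_mul, sub_zero]) _

theorem matryoshka_optimality_general {L kr kp : ℕ}
    (Hr : Matrix (Fin L) (Fin kr) ℝ) (Hp : Matrix (Fin L) (Fin kp) ℝ)
    (hL : kp ≤ L) (hrank : Hr.rank = kr)
    (Wstar : Matrix (Fin kr) (Fin kp) ℝ)
    (hW : Wstar = (Hrᵀ * Hr)⁻¹ * Hrᵀ * Hp)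
    (R : Matrix (Fin L) (Fin kp) ℝ)
    (hR : R = Hp - Hr * Wstar)
    (U : Matrix (Fin L) (Fin L) ℝ) (V : Matrix (Fin kp) (Fin kp) ℝ) (σ : ℕ → ℝ)
    (hU : Uᵀ * U = 1)
    (hV : Vᵀ * V = 1) (hV' : V * Vᵀ = 1)
    (hσ : Antitone σ) (hσ0 : ∀ i, 0 ≤ σ i)
    (hSVD : R = U * rectDiag L kp σ * Vᵀ)
    (m : ℕ) (hm : m ≤ kp - kr) :
    (∀ X : Matrix (Fin L) (Fin m) ℝ,
      sInf (Set.range fun A : Matrix (Fin kr ⊕ Fin m) (Fin kp) ℝ =>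
          frobSq (Hp - fromCols Hr (R * V.submatrix id (Fin.castLE (hm.trans (Nat.sub_le kp kr)))) * A)) ≤
        sInf (Set.range fun A : Matrix (Fin kr ⊕ Fin m) (Fin kp) ℝ =>
          frobSq (Hp - fromCols Hr X * A))) ∧
    (∀ m' : ℕ, ∀ hmm' : m ≤ m', ∀ hm' : m' ≤ kp,
      (R * V.submatrix id (Fin.castLE hm')).submatrix id (Fin.castLE hmm') =
        R * V.submatrix id (Fin.castLE (hm.trans (Nat.sub_le kp kr)))) := by
  refine ⟨fun X => ?_, fun _ _ _ => rfl⟩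
  set Vm := V.submatrix id (Fin.castLE (hm.trans (Nat.sub_le kp kr)))
  have hwitness : Hp - fromCols Hr (R * Vm) * fromRows Wstar Vmᵀ = R - R * Vm * Vmᵀ := by
    rw [fromCols_mul_fromRows, hR]
    abel
  have hLS : R = Hp - Hr * ((Hrᵀ * Hr)⁻¹ * Hrᵀ * Hp) := hW ▸ hR
  calc sInf (Set.range fun A => frobSq (Hp - fromCols Hr (R * Vm) * A))
      ≤ frobSq (Hp - fromCols Hr (R * Vm) * fromRows Wstar Vmᵀ) :=
        csInf_le ⟨0, Set.forall_mem_range.2 fun _ => frobSq_nonneg _⟩ ⟨_, rfl⟩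
    _ = ∑ i ∈ Ico m kp, σ i ^ 2 := by
        rw [hwitness, frobSq_sub_mul_submatrix_castLE hL _ hU hV hSVD]
    _ ≤ sInf (Set.range fun A => frobSq (Hp - fromCols Hr X * A)) :=
        le_csInf (Set.range_nonempty _) <| Set.forall_mem_range.2 <|
          sum_Ico_sq_le_frobSq_sub_fromCols_mul hσ hσ0 hL hU hV' hrank hLS hSVD X

/-- Nested/Matryoshka optimality: for each `1 ≤ m ≤ k_p − k_r`, the projected
residual `H_res^{(m)} = R V_m` gives an optimal `m`-dimensional augmentation of
`H_r`, and `H_res^{(m)}` is the matrix of first `m` columns of `H_res^{(m')}`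
for every `m' ≥ m`; so each prefix of the reverse-distilled embedding is itself
an optimal representation at its dimension. -/
theorem matryoshka_optimality {L kr kp : ℕ}
    (Hr : Matrix (Fin L) (Fin kr) ℝ) (Hp : Matrix (Fin L) (Fin kp) ℝ)
    (hk : kr < kp) (hL : kp ≤ L) (hrank : Hr.rank = kr)
    (Wstar : Matrix (Fin kr) (Fin kp) ℝ)
    (hW : Wstar = (Hrᵀ * Hr)⁻¹ * Hrᵀ * Hp)
    (R : Matrix (Fin L) (Fin kp) ℝ)
    (hR : R = Hp - Hr * Wstar)
    (U : Matrix (Fin L) (Fin L) ℝ) (V : Matrix (Fin kp) (Fin kp) ℝ) (σ : ℕ → ℝ)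
    (hU : Uᵀ * U = 1) (hU' : U * Uᵀ = 1)
    (hV : Vᵀ * V = 1) (hV' : V * Vᵀ = 1)
    (hσ : Antitone σ) (hσ0 : ∀ i, 0 ≤ σ i)
    (hSVD : R = U * rectDiag L kp σ * Vᵀ)
    (m : ℕ) (hm1 : 1 ≤ m) (hm : m ≤ kp - kr) :
    (∀ X : Matrix (Fin L) (Fin m) ℝ,
      sInf (Set.range fun A : Matrix (Fin kr ⊕ Fin m) (Fin kp) ℝ =>
          frobSq (Hp - fromCols Hr (R * V.submatrix id (Fin.castLE (hm.trans (Nat.sub_le kp kr)))) * A)) ≤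
        sInf (Set.range fun A : Matrix (Fin kr ⊕ Fin m) (Fin kp) ℝ =>
          frobSq (Hp - fromCols Hr X * A))) ∧
    (∀ m' : ℕ, ∀ hmm' : m ≤ m', ∀ hm' : m' ≤ kp,
      (R * V.submatrix id (Fin.castLE hm')).submatrix id (Fin.castLE hmm') =
        R * V.submatrix id (Fin.castLE (hm.trans (Nat.sub_le kp kr)))) :=
  matryoshka_optimality_general Hr Hp hL hrank Wstar hW R hR U V σ hU hV hV' hσ hσ0 hSVD m hm
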